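/- Padding separation for local LCS: let x, y be two symbols not occurring in strings U_1,...,U_N, V_1,...,V_N, each of length at most L. Define P_1 = U_1 x^L U_2 x^L ... U_N x^L and P_2 = V_1 y^L V_2 y^L ... V_N y^L. Then for any substrings S_1 of P_1 and S_2 of P_2, each of length at most L, LCS(S_1, S_2) ≤ max_{i,j} LCS(U_i, V_j); moreover this maximum is attained by some pair of substrings of length at most L (namely S_1 = U_i, S_2 = V_j for the maximizing pair). -/

import Mathlib

/-!
Since `x` never occurs in `P₂` and `y` never occurs in `P₁`, a common subsequence of `S₁` and
`S₂` avoids both padding symbols, so it is a common subsequence of `S₁` with the `x`s erased and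
`S₂` with the `y`s erased. A window of length at most `L` cannot reach across a full padding run
`x^L`, so once its padding symbols are erased it is a subsequence of a single block `U i`;
likewise on the other side with a single `V j`.
-/

/-- Length of a longest common subsequence of two lists. -/
noncomputable def lcs {α : Type*} (x y : List α) : ℕ :=
  sSup {n | ∃ z : List α, z.Sublist x ∧ z.Sublist y ∧ z.length = n}

/-- The padded concatenation `U₁ x^L U₂ x^L ⋯ U_N x^L`. -/
def padded {α : Type*} (N L : ℕ) (x : α) (U : ℕ → List α) : List α :=
  ((List.range N).map fun i => U i ++ List.replicate L x).flatten

open List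

section LCS

variable {α : Type*} {u u' v v' z : List α}

theorem le_lcs (hu : z <+ u) (hv : z <+ v) : z.length ≤ lcs u v :=
  le_csSup ⟨u.length, by rintro n ⟨w, hw, -, rfl⟩; exact hw.length_le⟩ ⟨z, hu, hv, rfl⟩

theorem lcs_le {m : ℕ} (h : ∀ z, z <+ u → z <+ v → z.length ≤ m) : lcs u v ≤ m :=
  csSup_le ⟨0, [], nil_sublist _, nil_sublist _, rfl⟩
    fun _ ⟨z, hu, hv, hz⟩ => hz ▸ h z hu hv

theorem lcs_mono (hu : u' <+ u) (hv : v' <+ v) : lcs u' v' ≤ lcs u v :=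
  lcs_le fun _ hzu hzv => le_lcs (hzu.trans hu) (hzv.trans hv)

theorem List.Sublist.sublist_filter {p : α → Bool} (h : z <+ u) (hp : ∀ a ∈ z, p a) :
    z <+ u.filter p :=
  filter_eq_self.2 hp ▸ h.filter p

theorem lcs_eq_lcs_filter {p q : α → Bool} (hp : ∀ a ∈ v, p a) (hq : ∀ a ∈ u, q a) :
    lcs u v = lcs (u.filter p) (v.filter q) :=
  le_antisymm
    (lcs_le fun _ hzu hzv => le_lcs (hzu.sublist_filter fun a ha => hp a (hzv.subset ha))
      (hzv.sublist_filter fun a ha => hq a (hzu.subset ha)))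
    (lcs_mono filter_sublist filter_sublist)

end LCS

theorem List.infix_append_cases {α : Type*} {S A T : List α} (h : S <:+: A ++ T) :
    S <:+: A ∨ S <:+: T ∨ ∃ a t, a <:+ A ∧ t <+: T ∧ S = a ++ t := by
  obtain ⟨s, t, h⟩ := h
  rw [append_assoc, append_eq_append_iff] at h
  rcases h with ⟨a, rfl, h⟩ | ⟨c, rfl, rfl⟩
  · rw [append_eq_append_iff] at h
    rcases h with ⟨b, rfl, rfl⟩ | ⟨c, rfl, rfl⟩
    · exact Or.inl ⟨s, b, by simp⟩
    · exact Or.inr (Or.inr ⟨a, c, suffix_append s a, prefix_append c t, rfl⟩)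
  · exact Or.inr (Or.inl (infix_append' c S t))

section Padding

variable {α : Type*}

theorem filter_ne_eq_nil_or_sublist_block [DecidableEq α] (L : ℕ) (x : α) :
    ∀ (us : List (List α)) {S : List α}, S <:+: (us.map (· ++ replicate L x)).flatten →
      S.length ≤ L → S.filter (· ≠ x) = [] ∨ ∃ u ∈ us, S.filter (· ≠ x) <+ u
  | [], S, h, _ => by
    rw [map_nil, flatten_nil, infix_nil] at h
    simp [h]
  | u :: us, S, h, hS => by
    rw [map_cons, flatten_cons] at h
    rcases infix_append_cases h with hu | hus | ⟨a, t, ha, ht, rfl⟩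
    · have hfilter : (u ++ replicate L x).filter (· ≠ x) = u.filter (· ≠ x) := by
        simp [filter_append]
      exact Or.inr ⟨u, mem_cons_self, (hfilter ▸ hu.sublist.filter _).trans filter_sublist⟩
    · exact (filter_ne_eq_nil_or_sublist_block L x us hus hS).imp_right
        fun ⟨u', hu', hsub⟩ => ⟨u', mem_cons_of_mem u hu', hsub⟩
    · -- `a` ends in the run `x^L` and is no longer than it, so it lies inside it.
      have hpad : a <:+ replicate L x :=
        suffix_of_suffix_length_le ha (suffix_append u _) (by simp at hS ⊢; omega)
      have ha_nil : a.filter (· ≠ x) = [] :=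
        filter_eq_nil_iff.2 fun b hb => by simpa using eq_of_mem_replicate (hpad.subset hb)
      rw [filter_append, ha_nil, nil_append]
      exact (filter_ne_eq_nil_or_sublist_block L x us ht.isInfix
        ((sublist_append_right a t).length_le.trans hS)).imp_right
          fun ⟨u', hu', hsub⟩ => ⟨u', mem_cons_of_mem u hu', hsub⟩

theorem exists_sublist_block_of_infix_padded [DecidableEq α] {N L : ℕ} (hN : 0 < N) {x : α}
    {U : ℕ → List α} {S : List α} (h : S <:+: padded N L x U) (hS : S.length ≤ L) :
    ∃ i < N, S.filter (· ≠ x) <+ U i := by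
  rw [padded, show (fun i => U i ++ replicate L x) = (· ++ replicate L x) ∘ U from rfl,
    ← map_map] at h
  rcases filter_ne_eq_nil_or_sublist_block L x _ h hS with hnil | ⟨u, hu, hsub⟩
  · exact ⟨0, hN, hnil ▸ nil_sublist _⟩
  · obtain ⟨i, hi, rfl⟩ := mem_map.1 hu
    exact ⟨i, mem_range.1 hi, hsub⟩

theorem not_mem_padded {N L : ℕ} {a y : α} {V : ℕ → List α} (hV : ∀ j < N, a ∉ V j)
    (hay : a ≠ y) : a ∉ padded N L y V := by
  intro h
  obtain ⟨_, hl, ha⟩ := mem_flatten.1 h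
  obtain ⟨j, hj, rfl⟩ := mem_map.1 hl
  rcases mem_append.1 ha with h | h
  · exact hV j (mem_range.1 hj) h
  · exact hay (eq_of_mem_replicate h)

theorem infix_padded {N L i : ℕ} (hi : i < N) (x : α) (U : ℕ → List α) :
    U i <:+: padded N L x U :=
  (prefix_append _ _).isInfix.trans
    (infix_of_mem_flatten (mem_map.2 ⟨i, mem_range.2 hi, rfl⟩))

end Padding

/-- padding separation for local LCS.  If `x, y` are distinct
symbols not occurring in the blocks `U₁,…,U_N, V₁,…,V_N` (each of length at
most `L`), then for `P₁ = U₁ x^L ⋯ U_N x^L` and `P₂ = V₁ y^L ⋯ V_N y^L`, any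
substrings `S₁ ⊆ P₁`, `S₂ ⊆ P₂` of length at most `L` satisfy
`LCS(S₁,S₂) ≤ max_{i,j} LCS(U_i, V_j)`, and this maximum is attained by the
pair of substrings `S₁ = U_i`, `S₂ = V_j` (of length at most `L`) for a
maximizing pair `(i,j)`. -/
theorem padding_separation {α : Type*} (N L : ℕ) (hN : 0 < N) (x y : α)
    (hxy : x ≠ y) (U V : ℕ → List α)
    (hU : ∀ i < N, (U i).length ≤ L ∧ x ∉ U i ∧ y ∉ U i)
    (hV : ∀ j < N, (V j).length ≤ L ∧ x ∉ V j ∧ y ∉ V j) :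
    (∀ S₁ S₂ : List α, S₁ <:+: padded N L x U → S₂ <:+: padded N L y V →
      S₁.length ≤ L → S₂.length ≤ L →
      lcs S₁ S₂ ≤ (Finset.range N ×ˢ Finset.range N).sup fun p => lcs (U p.1) (V p.2)) ∧
    (∃ i < N, ∃ j < N, U i <:+: padded N L x U ∧ V j <:+: padded N L y V ∧
      (U i).length ≤ L ∧ (V j).length ≤ L ∧
      lcs (U i) (V j) =
        (Finset.range N ×ˢ Finset.range N).sup fun p => lcs (U p.1) (V p.2)) := by
  classical
  refine ⟨fun S₁ S₂ h₁ h₂ hl₁ hl₂ => ?_, ?_⟩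
  · have hx : x ∉ S₂ := fun hx =>
      not_mem_padded (fun j hj => (hV j hj).2.1) hxy (h₂.subset hx)
    have hy : y ∉ S₁ := fun hy =>
      not_mem_padded (fun i hi => (hU i hi).2.2) hxy.symm (h₁.subset hy)
    obtain ⟨i, hi, hS₁⟩ := exists_sublist_block_of_infix_padded hN h₁ hl₁
    obtain ⟨j, hj, hS₂⟩ := exists_sublist_block_of_infix_padded hN h₂ hl₂
    calc lcs S₁ S₂ = lcs (S₁.filter (· ≠ x)) (S₂.filter (· ≠ y)) :=
          lcs_eq_lcs_filter (fun a ha => decide_eq_true (ne_of_mem_of_not_mem ha hx))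
            (fun a ha => decide_eq_true (ne_of_mem_of_not_mem ha hy))
      _ ≤ lcs (U i) (V j) := lcs_mono hS₁ hS₂
      _ ≤ _ := Finset.le_sup (f := fun p => lcs (U p.1) (V p.2)) (b := (i, j))
          (Finset.mem_product.2 ⟨Finset.mem_range.2 hi, Finset.mem_range.2 hj⟩)
  · obtain ⟨⟨i, j⟩, hij, hsup⟩ :=
      Finset.exists_mem_eq_sup (Finset.range N ×ˢ Finset.range N)
        (by simp [Finset.nonempty_range_iff, hN.ne']) fun p => lcs (U p.1) (V p.2)
    rw [Finset.mem_product, Finset.mem_range, Finset.mem_range] at hij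
    exact ⟨i, hij.1, j, hij.2, infix_padded hij.1 x U, infix_padded hij.2 y V,
      (hU i hij.1).1, (hV j hij.2).1, hsup.symm⟩
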